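/- arXiv:2009.00808 — 2 statements merged into one kernel-verified Lean document; each statement's English description precedes it below -/
import Mathlib

section
/- Let {F_j}_{j ∈ J} be a family of subsets of a finite set F whose intersection graph is bipartite with parts A and B. Then the polytope {y ∈ [0,1]^F : y(F_j) = 1 for all j ∈ J} is a face of the intersection of the two partition matroid polytopes determined by {F_j : j ∈ A} and {F_j : j ∈ B}; consequently, if the sets within each part A (respectively B) are pairwise disjoint, every extreme point of this polytope is integral. -/
/-!
Let `S` be the set of fractional coordinates of `y`. Since `y(F_j) = 1` and the coordinates
outside `S` are `0` or `1`, no `F_j` meets `S` in exactly one point. The sets of each part are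
disjoint, so each part has at most `|S| / 2` sets meeting `S`: there are at most `|S|` constraints
`d(F_j ∩ S) = 0` on vectors `d` supported on `S`, and when there are exactly `|S|` of them, both
parts partition `S` and the constraints are dependent. Either way some `d ≠ 0` satisfies them
all, and `y ± ε d` stays in the polytope for small `ε > 0`, contradicting extremality.
-/

open Finset Filter Topology Module

theorem exists_ne_zero_forall_apply_eq_zero {K V m : Type*} [Field K] [AddCommGroup V]
    [Module K V] [FiniteDimensional K V] (φ : m → Dual K V)
    (h : (Set.range φ).finrank K < finrank K V) :
    ∃ v ≠ 0, ∀ k, φ k v = 0 := by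
  set W := Submodule.span K (Set.range φ)
  have hW : W.dualCoannihilator ≠ ⊥ := by
    intro hbot
    have := Subspace.finrank_add_finrank_dualCoannihilator_eq W
    rw [hbot, finrank_bot, add_zero] at this
    exact h.ne this
  obtain ⟨v, hv, hv0⟩ := Submodule.exists_mem_ne_zero_of_ne_bot hW
  exact ⟨v, hv0, fun k => (Submodule.mem_dualCoannihilator v).1 hv _
    (Submodule.subset_span ⟨k, rfl⟩)⟩

def coordSum (K : Type*) {ι : Type*} [CommSemiring K] (s : Finset ι) : (ι → K) →ₗ[K] K :=
  ∑ i ∈ s, LinearMap.proj i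

@[simp]
theorem coordSum_apply {K ι : Type*} [CommSemiring K] (s : Finset ι) (d : ι → K) :
    coordSum K s d = ∑ i ∈ s, d i := by
  simp [coordSum]

section PairwiseDisjoint

variable {ι κ : Type*} {A : Finset κ} {F : κ → Finset ι}

theorem two_mul_card_le_card_biUnion [DecidableEq ι] (hA : (A : Set κ).PairwiseDisjoint F)
    (h2 : ∀ j ∈ A, 2 ≤ #(F j)) : 2 * #A ≤ #(A.biUnion F) := by
  rw [card_biUnion hA, mul_comm, ← smul_eq_mul, ← sum_const]
  exact sum_le_sum h2

theorem sum_sum_eq_sum_univ_of_two_mul_card_eq {M : Type*} [AddCommMonoid M] [Fintype ι]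
    (hA : (A : Set κ).PairwiseDisjoint F) (h2 : ∀ j ∈ A, 2 ≤ #(F j))
    (hcard : 2 * #A = Fintype.card ι) (f : ι → M) :
    ∑ j ∈ A, ∑ i ∈ F j, f i = ∑ i, f i := by
  classical
  have hle := (two_mul_card_le_card_biUnion hA h2).trans_eq' hcard
  rw [← sum_biUnion hA, eq_univ_of_card _ (le_antisymm (card_le_univ _) hle)]

end PairwiseDisjoint

theorem finrank_range_coordSum_lt {K ι κ : Type*} [Field K] [Fintype ι] [Nonempty ι]
    {A B : Finset κ} {F : κ → Finset ι} (hA : (A : Set κ).PairwiseDisjoint F)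
    (hB : (B : Set κ).PairwiseDisjoint F) (hA2 : ∀ j ∈ A, 2 ≤ #(F j))
    (hB2 : ∀ j ∈ B, 2 ≤ #(F j)) :
    (Set.range (Sum.elim (fun j : A => coordSum K (F j)) fun j : B => coordSum K (F j))).finrank
      K < Fintype.card ι := by
  classical
  set φ := Sum.elim (fun j : A => coordSum K (F j)) fun j : B => coordSum K (F j)
  have hA' := (two_mul_card_le_card_biUnion hA hA2).trans (card_le_univ _)
  have hB' := (two_mul_card_le_card_biUnion hB hB2).trans (card_le_univ _)
  have hle := finrank_range_le_card (R := K) φ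
  rw [Fintype.card_sum, Fintype.card_coe, Fintype.card_coe] at hle
  refine lt_of_le_of_ne (hle.trans (by omega)) fun heq => ?_
  have hli : LinearIndependent K φ := linearIndependent_iff_card_eq_finrank_span.2 (by
    rw [Fintype.card_sum, Fintype.card_coe, Fintype.card_coe]; omega)
  -- In the tight case both `A` and `B` partition `ι`, so their rows have the same sum.
  have hdep : ∑ k, Sum.elim (fun _ => (1 : K)) (fun _ => -1) k • φ k = 0 := by
    have hneg (f : (ι → K) →ₗ[K] K) : (-1 : K) • f = -f := neg_one_smul K f
    simp only [φ, Fintype.sum_sum_type, Sum.elim_inl, Sum.elim_inr, one_smul, hneg,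
      sum_neg_distrib]
    rw [sum_coe_sort A fun j => coordSum K (F j), sum_coe_sort B fun j => coordSum K (F j)]
    simp only [coordSum]
    rw [sum_sum_eq_sum_univ_of_two_mul_card_eq hA hA2 (by omega),
      sum_sum_eq_sum_univ_of_two_mul_card_eq hB hB2 (by omega), add_neg_cancel]
  obtain ⟨j, hj⟩ : A.Nonempty := by
    rw [← card_pos]; have := Fintype.card_pos (α := ι); omega
  simpa using Fintype.linearIndependent_iff.1 hli _ hdep (Sum.inl ⟨j, hj⟩)

theorem exists_ne_zero_forall_sum_eq_zero {K ι κ : Type*} [Field K] [Fintype ι] [Nonempty ι]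
    [DecidableEq κ] {A B : Finset κ} {F : κ → Finset ι} (hA : (A : Set κ).PairwiseDisjoint F)
    (hB : (B : Set κ).PairwiseDisjoint F) (hF : ∀ j ∈ A ∪ B, #(F j) ≠ 1) :
    ∃ d : ι → K, d ≠ 0 ∧ ∀ j ∈ A ∪ B, ∑ i ∈ F j, d i = 0 := by
  classical
  set A' := A.filter fun j => (F j).Nonempty
  set B' := B.filter fun j => (F j).Nonempty
  have two_le : ∀ j ∈ A ∪ B, (F j).Nonempty → 2 ≤ #(F j) := fun j hj hne =>
    (Nat.two_le_iff _).2 ⟨hne.card_pos.ne', hF j hj⟩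
  have hrank := finrank_range_coordSum_lt (K := K) (A := A') (B := B')
    (hA.subset (coe_subset.2 (filter_subset _ _))) (hB.subset (coe_subset.2 (filter_subset _ _)))
    (fun j hj => two_le j (mem_union_left _ (mem_filter.1 hj).1) (mem_filter.1 hj).2)
    (fun j hj => two_le j (mem_union_right _ (mem_filter.1 hj).1) (mem_filter.1 hj).2)
  rw [← finrank_fintype_fun_eq_card K] at hrank
  obtain ⟨d, hd0, hd⟩ := exists_ne_zero_forall_apply_eq_zero _ hrank
  refine ⟨d, hd0, fun j hj => ?_⟩
  rcases (F j).eq_empty_or_nonempty with hempty | hne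
  · rw [hempty, sum_empty]
  rcases mem_union.1 hj with hjA | hjB
  · simpa using hd (Sum.inl ⟨j, mem_filter.2 ⟨hjA, hne⟩⟩)
  · simpa using hd (Sum.inr ⟨j, mem_filter.2 ⟨hjB, hne⟩⟩)

theorem exists_ne_zero_supported_forall_sum_eq_zero {K ι κ : Type*} [Field K] [DecidableEq ι]
    [DecidableEq κ] {S : Finset ι} (hS : S.Nonempty) {A B : Finset κ} {F : κ → Finset ι}
    (hA : (A : Set κ).PairwiseDisjoint F) (hB : (B : Set κ).PairwiseDisjoint F)
    (hF : ∀ j ∈ A ∪ B, #(F j ∩ S) ≠ 1) :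
    ∃ d : ι → K, d ≠ 0 ∧ (∀ i ∉ S, d i = 0) ∧ ∀ j ∈ A ∪ B, ∑ i ∈ F j, d i = 0 := by
  classical
  have : Nonempty S := hS.coe_sort
  let F' (j : κ) : Finset S := (F j).subtype (· ∈ S)
  have disjoint_F' {C : Finset κ} (hC : (C : Set κ).PairwiseDisjoint F) :
      (C : Set κ).PairwiseDisjoint F' := fun j hj j' hj' hne =>
    disjoint_left.2 fun i hi hi' => disjoint_left.1 (hC hj hj' hne) (mem_subtype.1 hi)
      (mem_subtype.1 hi')
  obtain ⟨d, hd0, hd⟩ := exists_ne_zero_forall_sum_eq_zero (K := K) (disjoint_F' hA)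
    (disjoint_F' hB) fun j hj => by rw [card_subtype, filter_mem_eq_inter]; exact hF j hj
  set e := Function.extend ((↑) : S → ι) d 0
  have he (i : S) : e i = d i := Subtype.val_injective.extend_apply _ _ _
  have he' (i : ι) (hi : i ∉ S) : e i = 0 :=
    Function.extend_apply' _ _ _ fun ⟨i', hi'⟩ => hi (hi' ▸ i'.2)
  refine ⟨e, fun h => hd0 (funext fun i => by rw [← he, h]; rfl), he', fun j hj => ?_⟩
  rw [← hd j hj]
  simp only [F', ← he, sum_subtype_eq_sum_filter]
  exact (sum_filter_of_ne fun i _ hi => by_contra fun hiS => hi (he' i hiS)).symm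

theorem eventually_add_mul_mem_Icc {a b y d : ℝ} (hy : y ∈ Set.Icc a b)
    (hd : d ≠ 0 → y ∈ Set.Ioo a b) : ∀ᶠ t in 𝓝 0, y + t * d ∈ Set.Icc a b := by
  rcases eq_or_ne d 0 with rfl | hd0
  · simpa using hy
  have hcont : Tendsto (fun t : ℝ => y + t * d) (𝓝 0) (𝓝 y) :=
    Continuous.tendsto' (by fun_prop) 0 y (by simp)
  exact (hcont.eventually (isOpen_Ioo.mem_nhds (hd hd0))).mono fun _ h =>
    Set.Ioo_subset_Icc_self h

theorem eq_zero_of_mem_extremePoints {E : Type*} [AddCommGroup E] [Module ℝ E] {C : Set E}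
    {x v : E} (hx : x ∈ Set.extremePoints ℝ C) (hv : ∀ᶠ t in 𝓝 (0 : ℝ), x + t • v ∈ C) :
    v = 0 := by
  have hv' : ∀ᶠ t in 𝓝 (0 : ℝ), x + t • v ∈ C ∧ x + (-t) • v ∈ C :=
    hv.and ((continuous_neg.tendsto' 0 0 neg_zero).eventually hv)
  obtain ⟨t, ⟨hplus, hminus⟩, ht⟩ :=
    ((eventually_nhdsWithin_of_eventually_nhds hv').and self_mem_nhdsWithin).exists
      (f := 𝓝[>] (0 : ℝ))
  have hseg : x ∈ openSegment ℝ (x + (-t) • v) (x + t • v) :=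
    ⟨1 / 2, 1 / 2, by norm_num, by norm_num, by norm_num, by
      rw [neg_smul, smul_add, smul_add, ← add_add_add_comm, smul_neg, ← add_smul]; norm_num⟩
  have := hx.2 hminus hplus hseg
  rw [add_eq_left, smul_eq_zero] at this
  exact this.resolve_left (neg_ne_zero.2 ht.ne')

theorem card_filter_mem_Ioo_ne_one {ι : Type*} {F : Finset ι} {y : ι → ℝ}
    (hy : ∀ i ∈ F, y i ∈ Set.Icc 0 1) (hsum : ∑ i ∈ F, y i = 1) :
    #(F.filter fun i => y i ∈ Set.Ioo 0 1) ≠ 1 := by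
  classical
  intro h
  obtain ⟨a, ha⟩ := card_eq_one.1 h
  obtain ⟨haF, hya⟩ := mem_filter.1 (ha ▸ mem_singleton_self a)
  have hint (i : ι) (hi : i ∈ F.erase a) : y i = if y i = 1 then 1 else 0 := by
    have hIoo : y i ∉ Set.Ioo 0 1 := fun hIoo => by
      have hmem := (mem_filter (p := fun i => y i ∈ Set.Ioo 0 1)).2 ⟨mem_of_mem_erase hi, hIoo⟩
      rw [ha] at hmem
      exact ne_of_mem_erase hi (mem_singleton.1 hmem)
    have h01 : y i ∈ ({0, 1} : Set ℝ) :=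
      Set.Icc_sdiff_Ioo_same (zero_le_one (α := ℝ)) ▸ ⟨hy i (mem_of_mem_erase hi), hIoo⟩
    obtain h0 | h1 : y i = 0 ∨ y i = 1 := by simpa using h01
    · simp [h0]
    · simp [h1]
  -- Now `y a = 1 - n` with `n` the number of other coordinates equal to `1`.
  rw [← add_sum_erase F y haF, sum_congr rfl hint, sum_boole] at hsum
  set n := #((F.erase a).filter fun i => y i = 1)
  have hpos : 0 < n := by exact_mod_cast (by linarith [hya.2] : (0 : ℝ) < n)
  have hlt : n < 1 := by exact_mod_cast (by linarith [hya.1] : (n : ℝ) < 1)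
  omega

/-- If {F_j}_{j∈A} are pairwise disjoint and {F_j}_{j∈B} are pairwise disjoint,
then every extreme point of the polytope
{y ∈ [0,1]^F : y(F_j) = 1 for all j ∈ A ∪ B} is integral. -/
theorem extreme_points_integral {ι κ : Type*} [Fintype ι] [DecidableEq κ]
    (A B : Finset κ) (Fj : κ → Finset ι)
    (hA : (A : Set κ).Pairwise fun j j' => Disjoint (Fj j) (Fj j'))
    (hB : (B : Set κ).Pairwise fun j j' => Disjoint (Fj j) (Fj j'))
    (y : ι → ℝ)
    (hy : y ∈ Set.extremePoints ℝ
      {z : ι → ℝ | (∀ i, z i ∈ Set.Icc (0 : ℝ) 1) ∧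
        ∀ j ∈ A ∪ B, ∑ i ∈ Fj j, z i = 1}) :
    ∀ i, y i = 0 ∨ y i = 1 := by
  classical
  by_contra! hfrac
  obtain ⟨i₀, hi₀⟩ := hfrac
  obtain ⟨hbox, hsum⟩ := hy.1
  set S := univ.filter fun i => y i ∈ Set.Ioo 0 1
  have hS : i₀ ∈ S := by
    simpa [S] using
      ⟨lt_of_le_of_ne (hbox i₀).1 (Ne.symm hi₀.1), lt_of_le_of_ne (hbox i₀).2 hi₀.2⟩
  obtain ⟨d, hd0, hdS, hdsum⟩ := exists_ne_zero_supported_forall_sum_eq_zero (K := ℝ) ⟨i₀, hS⟩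
    hA hB fun j hj => by
      simpa [S, inter_filter] using card_filter_mem_Ioo_ne_one (fun i _ => hbox i) (hsum j hj)
  refine hd0 (eq_zero_of_mem_extremePoints hy ?_)
  have hmove (i : ι) : d i ≠ 0 → y i ∈ Set.Ioo 0 1 := fun hdi =>
    by_contra fun hi => hdi (hdS i (by simpa [S] using hi))
  filter_upwards [eventually_all.2 fun i => eventually_add_mul_mem_Icc (hbox i) (hmove i)]
    with t ht
  refine ⟨ht, fun j hj => ?_⟩
  simp [sum_add_distrib, ← mul_sum, hsum j hj, hdsum j hj]
end

section
/- Suppose additionally that ȳ_i = 1 for all i in a subset F₁ ⊆ F. Then the integral point ŷ in the previous statement can be chosen so that ŷ_i = 1 for all i ∈ F₁. -/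
/-!
Iterative rounding. Let `S` be the set of fractional coordinates of a feasible `y`. A family
meeting `S` meets it at least twice, since its sum is an integer; as the `A`-families and the
`B`-families are each disjoint, at most `|S|` families meet `S`, and if exactly `|S|` do, each
side covers `S` and the `A`-rows and `B`-rows restricted to `S` have equal sums. Either way the
constraints have rank `< |S|` on `S`, which gives a nonzero direction `d` supported on `S` that
keeps every family sum. Moving along `±d`, with the sign for which the cost does not increase,
until a coordinate reaches `0` or `1` removes a fractional coordinate and leaves the integral
ones, in particular the ones equal to `1`, untouched.
-/

open Finset Module

section PairwiseDisjoint

variable {ι κ : Type*} [DecidableEq ι] {Fj : κ → Finset ι} {P : Finset κ}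

lemma two_mul_card_le_card_biUnion_inter (hP : (P : Set κ).PairwiseDisjoint Fj) {S : Finset ι}
    (h2 : ∀ j ∈ P, 2 ≤ #(Fj j ∩ S)) :
    2 * #P ≤ #(P.biUnion fun j => Fj j ∩ S) := by
  rw [card_biUnion fun j hj j' hj' hne =>
    (hP hj hj' hne).mono inter_subset_left inter_subset_left]
  calc 2 * #P = ∑ _j ∈ P, 2 := by rw [sum_const, smul_eq_mul, mul_comm]
    _ ≤ _ := sum_le_sum h2

lemma sum_ite_mem_eq_of_pairwiseDisjoint {M : Type*} [AddCommMonoid M]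
    (hP : (P : Set κ).PairwiseDisjoint Fj) {i : ι} {j₀ : κ} (hj₀ : j₀ ∈ P) (hi : i ∈ Fj j₀)
    (a : M) : ∑ j ∈ P, (if i ∈ Fj j then a else 0) = a := by
  rw [sum_eq_single_of_mem j₀ hj₀ fun j hj hne => if_neg fun hij =>
    disjoint_left.mp (hP hj hj₀ hne) hij hi, if_pos hi]

end PairwiseDisjoint

lemma exists_ne_zero_sum_smul_eq_zero_of_finrank_span_lt {ι K M : Type*} [Fintype ι]
    [Field K] [AddCommGroup M] [Module K M] {v : ι → M} {S : Finset ι}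
    (h : finrank K (Submodule.span K (v '' S)) < #S) :
    ∃ d : ι → K, d ≠ 0 ∧ (∀ i ∉ S, d i = 0) ∧ ∑ i, d i • v i = 0 := by
  classical
  have hdep : ¬ LinearIndepOn K v S := fun hli => by
    have := finrank_span_eq_card hli
    rw [← Set.image_eq_range] at this
    simp only [coe_sort_coe, Fintype.card_coe] at this
    omega
  obtain ⟨f, hf, i, hi, hfi⟩ := not_linearIndepOn_finset_iff.mp hdep
  refine ⟨fun i => if i ∈ S then f i else 0, fun h0 => hfi ?_, fun i hi => if_neg hi, ?_⟩
  · simpa [hi] using congrFun h0 i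
  · simpa [ite_smul] using hf

section Incidence

variable {ι κ : Type*} [DecidableEq ι] (Fj : κ → Finset ι)

def incidenceVector (P : Finset κ) (i : ι) : P → ℝ := fun j => if i ∈ Fj j then 1 else 0

variable {Fj}

-- When `P` and `Q` both cover `S`, the incidence vectors lie in the hyperplane
-- `∑ P-coordinates = ∑ Q-coordinates`; otherwise already `#P + #Q < #S`.
lemma finrank_span_incidenceVector_lt {P Q : Finset κ} (hP : (P : Set κ).PairwiseDisjoint Fj)
    (hQ : (Q : Set κ).PairwiseDisjoint Fj) {S : Finset ι} (hS : S.Nonempty)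
    (hP2 : ∀ j ∈ P, 2 ≤ #(Fj j ∩ S)) (hQ2 : ∀ j ∈ Q, 2 ≤ #(Fj j ∩ S)) :
    finrank ℝ (Submodule.span ℝ
      ((fun i => (incidenceVector Fj P i, incidenceVector Fj Q i)) '' S)) < #S := by
  set CP := P.biUnion fun j => Fj j ∩ S
  set CQ := Q.biUnion fun j => Fj j ∩ S
  have hCP : CP ⊆ S := biUnion_subset.mpr fun _ _ => inter_subset_right
  have hCQ : CQ ⊆ S := biUnion_subset.mpr fun _ _ => inter_subset_right
  have hPCP : 2 * #P ≤ #CP := two_mul_card_le_card_biUnion_inter hP hP2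
  have hQCQ : 2 * #Q ≤ #CQ := two_mul_card_le_card_biUnion_inter hQ hQ2
  have hW : finrank ℝ ((P → ℝ) × (Q → ℝ)) = #P + #Q := by simp
  by_cases hcov : CP = S ∧ CQ = S
  · let φ : (P → ℝ) × (Q → ℝ) →ₗ[ℝ] ℝ :=
      (∑ j, LinearMap.proj j).coprod (-∑ j, LinearMap.proj j)
    have hspan : Submodule.span ℝ
        ((fun i => (incidenceVector Fj P i, incidenceVector Fj Q i)) '' S) ≤
          LinearMap.ker φ := by
      rw [Submodule.span_le]
      rintro _ ⟨i, hi, rfl⟩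
      obtain ⟨jP, hjP, hijP⟩ := mem_biUnion.mp (hcov.1 ▸ hi : i ∈ CP)
      obtain ⟨jQ, hjQ, hijQ⟩ := mem_biUnion.mp (hcov.2 ▸ hi : i ∈ CQ)
      simp only [SetLike.mem_coe, LinearMap.mem_ker, φ, incidenceVector, LinearMap.coprod_apply,
        LinearMap.neg_apply, LinearMap.sum_apply, LinearMap.coe_proj, Function.eval,
        sum_coe_sort P fun j => if i ∈ Fj j then (1 : ℝ) else 0,
        sum_coe_sort Q fun j => if i ∈ Fj j then (1 : ℝ) else 0,
        sum_ite_mem_eq_of_pairwiseDisjoint hP hjP (mem_inter.mp hijP).1,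
        sum_ite_mem_eq_of_pairwiseDisjoint hQ hjQ (mem_inter.mp hijQ).1, add_neg_cancel]
    have hker : LinearMap.ker φ ≠ ⊤ := by
      obtain ⟨i, hi⟩ := hS
      obtain ⟨j, hj, -⟩ := mem_biUnion.mp (hcov.1 ▸ hi : i ∈ CP)
      have hφ : φ (fun _ => 1, 0) = #P := by simp [φ]
      refine fun h => (Nat.cast_ne_zero.mpr (card_ne_zero_of_mem hj) : (#P : ℝ) ≠ 0) ?_
      rw [← hφ, ← LinearMap.mem_ker, h]
      exact Submodule.mem_top
    calc _ ≤ finrank ℝ (LinearMap.ker φ) := Submodule.finrank_mono hspan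
      _ < #P + #Q := hW ▸ Submodule.finrank_lt hker
      _ ≤ #S := by have := card_le_card hCP; have := card_le_card hCQ; omega
  · have : #CP < #S ∨ #CQ < #S := by
      by_contra! hle
      exact hcov ⟨eq_of_subset_of_card_le hCP hle.1, eq_of_subset_of_card_le hCQ hle.2⟩
    calc _ ≤ #P + #Q := hW ▸ Submodule.finrank_le _
      _ < #S := by have := card_le_card hCP; have := card_le_card hCQ; omega

end Incidence

section TwoPartitions

variable {ι κ : Type*} [Fintype ι] [DecidableEq ι] [DecidableEq κ] {A B : Finset κ}
  {Fj : κ → Finset ι}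

theorem exists_ne_zero_sum_eq_zero_of_two_le_card_inter
    (hA : (A : Set κ).PairwiseDisjoint Fj) (hB : (B : Set κ).PairwiseDisjoint Fj)
    {S : Finset ι} (hS : S.Nonempty) (h2 : ∀ j ∈ A ∪ B, (Fj j ∩ S).Nonempty → 2 ≤ #(Fj j ∩ S)) :
    ∃ d : ι → ℝ, d ≠ 0 ∧ (∀ i ∉ S, d i = 0) ∧ ∀ j ∈ A ∪ B, ∑ i ∈ Fj j, d i = 0 := by
  set JA := A.filter fun j => (Fj j ∩ S).Nonempty
  set JB := B.filter fun j => (Fj j ∩ S).Nonempty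
  have hrank := finrank_span_incidenceVector_lt (P := JA) (Q := JB)
    (hA.subset (coe_subset.mpr (filter_subset _ _)))
    (hB.subset (coe_subset.mpr (filter_subset _ _))) hS
    (fun j hj => h2 j (mem_union_left _ (mem_filter.mp hj).1) (mem_filter.mp hj).2)
    (fun j hj => h2 j (mem_union_right _ (mem_filter.mp hj).1) (mem_filter.mp hj).2)
  obtain ⟨d, hd0, hdS, hdv⟩ := exists_ne_zero_sum_smul_eq_zero_of_finrank_span_lt hrank
  refine ⟨d, hd0, hdS, fun j hj => ?_⟩
  by_cases hjS : (Fj j ∩ S).Nonempty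
  · rcases mem_union.mp hj with hjA | hjB
    · simpa [incidenceVector, Prod.fst_sum, Finset.sum_apply] using
        congrFun (congrArg Prod.fst hdv) ⟨j, mem_filter.mpr ⟨hjA, hjS⟩⟩
    · simpa [incidenceVector, Prod.snd_sum, Finset.sum_apply] using
        congrFun (congrArg Prod.snd hdv) ⟨j, mem_filter.mpr ⟨hjB, hjS⟩⟩
  · exact sum_eq_zero fun i hi => hdS i fun hiS => hjS ⟨i, mem_inter.mpr ⟨hi, hiS⟩⟩

end TwoPartitions

section FractionalCoords

variable {ι : Type*} [Fintype ι]

noncomputable def fractionalCoords (y : ι → ℝ) : Finset ι := {i | y i ∈ Set.Ioo 0 1}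

lemma mem_fractionalCoords {y : ι → ℝ} {i : ι} :
    i ∈ fractionalCoords y ↔ y i ∈ Set.Ioo 0 1 := by
  simp [fractionalCoords]

lemma eq_zero_or_eq_one_of_notMem_fractionalCoords {y : ι → ℝ} {i : ι} (hy : y i ∈ Set.Icc 0 1)
    (hi : i ∉ fractionalCoords y) : y i = 0 ∨ y i = 1 := by
  rw [mem_fractionalCoords, Set.mem_Ioo] at hi
  rcases hy.1.eq_or_lt with h | h
  · exact .inl h.symm
  · exact .inr (hy.2.eq_or_lt.resolve_right fun h' => hi ⟨h, h'⟩)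

lemma two_le_card_inter_fractionalCoords [DecidableEq ι] {y : ι → ℝ}
    (hy : ∀ i, y i ∈ Set.Icc 0 1) {F : Finset ι} (hF : ∑ i ∈ F, y i = 1)
    (hne : (F ∩ fractionalCoords y).Nonempty) : 2 ≤ #(F ∩ fractionalCoords y) := by
  by_contra! hlt
  obtain ⟨i₀, hi₀⟩ := card_eq_one.mp (le_antisymm (Nat.le_of_lt_succ hlt) hne.card_pos)
  have hmem : ∀ i, i ∈ F ∩ fractionalCoords y ↔ i = i₀ := by simp [hi₀]
  obtain ⟨hi₀F, hi₀frac⟩ := mem_inter.mp ((hmem i₀).mpr rfl)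
  have hint : ∀ i ∈ F.erase i₀, y i = 0 ∨ y i = 1 := fun i hi =>
    eq_zero_or_eq_one_of_notMem_fractionalCoords (hy i) fun hfrac =>
      (mem_erase.mp hi).1 ((hmem i).mp (mem_inter.mpr ⟨(mem_erase.mp hi).2, hfrac⟩))
  have hpos := mem_fractionalCoords.mp hi₀frac
  rw [← add_sum_erase _ _ hi₀F] at hF
  by_cases hone : ∃ i ∈ F.erase i₀, y i = 1
  · obtain ⟨i, hi, hyi⟩ := hone
    have := single_le_sum (fun i _ => (hy i).1) hi
    linarith [hpos.1]
  · push Not at hone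
    rw [sum_eq_zero fun i hi => (hint i hi).resolve_right (hone i hi)] at hF
    linarith [hpos.2]

end FractionalCoords

lemma exists_nonneg_add_mul_notMem_Ioo {y d : ℝ} (hy : y ∈ Set.Icc 0 1) (hd : d ≠ 0) :
    ∃ τ, 0 ≤ τ ∧ y + τ * d ∉ Set.Ioo 0 1 ∧ ∀ t ∈ Set.Icc 0 τ, y + t * d ∈ Set.Icc 0 1 := by
  obtain ⟨hy0, hy1⟩ := hy
  rcases hd.lt_or_gt with hneg | hpos
  · refine ⟨-y / d, div_nonneg_of_nonpos (by linarith) hneg.le, ?_, fun t ht => ?_⟩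
    · simp [div_mul_cancel₀ _ hd]
    · have := mul_le_mul_of_nonpos_right ht.2 hneg.le
      rw [div_mul_cancel₀ _ hd] at this
      constructor <;> nlinarith [ht.1]
  · refine ⟨(1 - y) / d, div_nonneg (by linarith) hpos.le, ?_, fun t ht => ?_⟩
    · simp [div_mul_cancel₀ _ hd]
    · have := mul_le_mul_of_nonneg_right ht.2 hpos.le
      rw [div_mul_cancel₀ _ hd] at this
      constructor <;> nlinarith [ht.1]

lemma exists_nonneg_add_mul_notMem_Ioo_of_forall_mem_Icc {ι : Type*} [Fintype ι] {y d : ι → ℝ}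
    (hy : ∀ i, y i ∈ Set.Icc 0 1) (hd : d ≠ 0) :
    ∃ t, 0 ≤ t ∧ (∀ i, y i + t * d i ∈ Set.Icc 0 1) ∧
      ∃ i, d i ≠ 0 ∧ y i + t * d i ∉ Set.Ioo 0 1 := by
  classical
  set s : Finset ι := {i | d i ≠ 0}
  have hs : s.Nonempty := by
    obtain ⟨i, hi⟩ := Function.ne_iff.mp hd
    exact ⟨i, by simpa [s] using hi⟩
  have hτ : ∀ i ∈ s, ∃ τ, 0 ≤ τ ∧ y i + τ * d i ∉ Set.Ioo 0 1 ∧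
      ∀ t ∈ Set.Icc 0 τ, y i + t * d i ∈ Set.Icc 0 1 := fun i hi =>
    exists_nonneg_add_mul_notMem_Ioo (hy i) (by simpa [s] using hi)
  choose! τ hτ0 hτend hτIcc using hτ
  obtain ⟨i₀, hi₀, ht⟩ := exists_mem_eq_inf' hs τ
  refine ⟨s.inf' hs τ, le_inf' hs τ hτ0, fun i => ?_, i₀, by simpa [s] using hi₀,
    ht ▸ hτend i₀ hi₀⟩
  by_cases hi : i ∈ s
  · exact hτIcc i hi _ ⟨le_inf' hs τ hτ0, inf'_le τ hi⟩
  · simpa [show d i = 0 by simpa [s] using hi] using hy i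

section Rounding

variable {ι κ : Type*} [Fintype ι] [DecidableEq ι] [DecidableEq κ] {A B : Finset κ}
  {Fj : κ → Finset ι}

theorem exists_feasible_fractionalCoords_ssubset
    (hA : (A : Set κ).PairwiseDisjoint Fj) (hB : (B : Set κ).PairwiseDisjoint Fj)
    (w : ι → ℝ) {y : ι → ℝ} (hy : ∀ i, y i ∈ Set.Icc 0 1)
    (hcov : ∀ j ∈ A ∪ B, ∑ i ∈ Fj j, y i = 1) (hfrac : (fractionalCoords y).Nonempty) :
    ∃ y' : ι → ℝ, (∀ i, y' i ∈ Set.Icc 0 1) ∧ (∀ j ∈ A ∪ B, ∑ i ∈ Fj j, y' i = 1) ∧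
      ∑ i, w i * y' i ≤ ∑ i, w i * y i ∧ (∀ i ∉ fractionalCoords y, y' i = y i) ∧
      fractionalCoords y' ⊂ fractionalCoords y := by
  obtain ⟨d₀, hd₀, hd₀S, hd₀F⟩ := exists_ne_zero_sum_eq_zero_of_two_le_card_inter hA hB hfrac
    fun j hj => two_le_card_inter_fractionalCoords hy (hcov j hj)
  obtain ⟨d, hd, hdS, hdF, hdw⟩ : ∃ d : ι → ℝ, d ≠ 0 ∧ (∀ i ∉ fractionalCoords y, d i = 0) ∧
      (∀ j ∈ A ∪ B, ∑ i ∈ Fj j, d i = 0) ∧ ∑ i, w i * d i ≤ 0 := by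
    rcases le_total (∑ i, w i * d₀ i) 0 with h | h
    · exact ⟨d₀, hd₀, hd₀S, hd₀F, h⟩
    · exact ⟨-d₀, neg_ne_zero.mpr hd₀, fun i hi => by simp [hd₀S i hi],
        fun j hj => by simp [hd₀F j hj], by simpa using h⟩
  obtain ⟨t, ht0, htIcc, i₀, hi₀d, hi₀⟩ := exists_nonneg_add_mul_notMem_Ioo_of_forall_mem_Icc hy hd
  have hoff : ∀ i ∉ fractionalCoords y, y i + t * d i = y i := fun i hi => by simp [hdS i hi]
  refine ⟨fun i => y i + t * d i, htIcc, fun j hj => ?_, ?_, hoff, ?_⟩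
  · rw [sum_add_distrib, ← mul_sum, hdF j hj, hcov j hj, mul_zero, add_zero]
  · calc ∑ i, w i * (y i + t * d i) = ∑ i, w i * y i + t * ∑ i, w i * d i := by
          simp only [mul_add, sum_add_distrib, mul_sum, mul_left_comm (w _) t]
      _ ≤ ∑ i, w i * y i := by nlinarith
  · have hsub : fractionalCoords (fun i => y i + t * d i) ⊆ fractionalCoords y := fun i hi => by
      by_contra hiy
      rw [mem_fractionalCoords, hoff i hiy] at hi
      exact hiy (mem_fractionalCoords.mpr hi)
    refine (ssubset_iff_of_subset hsub).mpr ⟨i₀, ?_, by rwa [mem_fractionalCoords]⟩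
    by_contra hiy
    exact hi₀d (hdS i₀ hiy)

theorem exists_integral_of_feasible
    (hA : (A : Set κ).PairwiseDisjoint Fj) (hB : (B : Set κ).PairwiseDisjoint Fj)
    (w y : ι → ℝ) (hy : ∀ i, y i ∈ Set.Icc 0 1)
    (hcov : ∀ j ∈ A ∪ B, ∑ i ∈ Fj j, y i = 1) :
    ∃ yhat : ι → ℝ, (∀ i, yhat i = 0 ∨ yhat i = 1) ∧ (∀ i, y i = 1 → yhat i = 1) ∧
      (∀ j ∈ A ∪ B, ∑ i ∈ Fj j, yhat i = 1) ∧ ∑ i, w i * yhat i ≤ ∑ i, w i * y i := by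
  induction hS : fractionalCoords y using Finset.strongInduction generalizing y with
  | H S ih =>
    rcases S.eq_empty_or_nonempty with rfl | hne
    · exact ⟨y, fun i => eq_zero_or_eq_one_of_notMem_fractionalCoords (hy i) (hS ▸ notMem_empty i),
        fun _ => id, hcov, le_rfl⟩
    obtain ⟨y', hy', hcov', hcost', hoff, hlt⟩ :=
      exists_feasible_fractionalCoords_ssubset hA hB w hy hcov (hS ▸ hne)
    obtain ⟨yhat, hint, hone, hcov'', hcost''⟩ := ih _ (hS ▸ hlt) y' hy' hcov' rfl
    refine ⟨yhat, hint, fun i hi => hone i ?_, hcov'', hcost''.trans hcost'⟩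
    rw [hoff i fun h => by simp [mem_fractionalCoords, hi] at h]
    exact hi

end Rounding

theorem exists_integral_rounding_keeping_ones_general {ι κ : Type*} [Fintype ι] [DecidableEq κ]
    (A B : Finset κ) (Fj : κ → Finset ι)
    (hA : (A : Set κ).Pairwise fun j j' => Disjoint (Fj j) (Fj j'))
    (hB : (B : Set κ).Pairwise fun j j' => Disjoint (Fj j) (Fj j'))
    (w : ι → ℝ) (B₀ : ℝ)
    (ybar : ι → ℝ) (hy0 : ∀ i, 0 ≤ ybar i) (hy1 : ∀ i, ybar i ≤ 1)
    (hcov : ∀ j ∈ A ∪ B, ∑ i ∈ Fj j, ybar i = 1)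
    (hbud : ∑ i, w i * ybar i ≤ B₀) :
    ∃ yhat : ι → ℝ, (∀ i, yhat i = 0 ∨ yhat i = 1) ∧
      (∀ i, ybar i = 1 → yhat i = 1) ∧
      (∀ j ∈ A ∪ B, ∑ i ∈ Fj j, yhat i = 1) ∧
      ∑ i, w i * yhat i ≤ B₀ := by
  classical
  obtain ⟨yhat, hint, hone, hcov', hcost⟩ :=
    exists_integral_of_feasible hA hB w ybar (fun i => ⟨hy0 i, hy1 i⟩) hcov
  exact ⟨yhat, hint, hone, hcov', hcost.trans hbud⟩

/-- As in the previous rounding statement, but additionally the integral point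
can be chosen to keep open every facility with ȳ_i = 1. -/
theorem exists_integral_rounding_keeping_ones {ι κ : Type*} [Fintype ι] [DecidableEq κ]
    (A B : Finset κ) (Fj : κ → Finset ι)
    (hA : (A : Set κ).Pairwise fun j j' => Disjoint (Fj j) (Fj j'))
    (hB : (B : Set κ).Pairwise fun j j' => Disjoint (Fj j) (Fj j'))
    (w : ι → ℝ) (hw : ∀ i, 0 ≤ w i) (B₀ : ℝ) (hB₀ : 0 ≤ B₀)
    (ybar : ι → ℝ) (hy0 : ∀ i, 0 ≤ ybar i) (hy1 : ∀ i, ybar i ≤ 1)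
    (hcov : ∀ j ∈ A ∪ B, ∑ i ∈ Fj j, ybar i = 1)
    (hbud : ∑ i, w i * ybar i ≤ B₀) :
    ∃ yhat : ι → ℝ, (∀ i, yhat i = 0 ∨ yhat i = 1) ∧
      (∀ i, ybar i = 1 → yhat i = 1) ∧
      (∀ j ∈ A ∪ B, ∑ i ∈ Fj j, yhat i = 1) ∧
      ∑ i, w i * yhat i ≤ B₀ :=
  exists_integral_rounding_keeping_ones_general A B Fj hA hB w B₀ ybar hy0 hy1 hcov hbud
end
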